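/- arXiv:2602.16524 — 3 statements merged into one kernel-verified Lean document; each statement's English description precedes it below -/
import Mathlib

section
/- Let N ≥ 3 and let f : ℝ^N × ℝ → ℝ be a Carathéodory function (measurable in x, continuous in u) satisfying (F2) and (F4). Then for every x ∈ ℝ^N and every u ∈ ℝ one has f(x,u)·u ≥ 2F(x,u) ≥ 0, where F(x,u) = ∫₀^u f(x,s) ds. -/
open MeasureTheory

/-- If `f` is a Carathéodory function satisfying (F2) and (F4), then
`f(x,u)·u ≥ 2F(x,u) ≥ 0`, where `F(x,u) = ∫₀ᵘ f(x,s) ds`. -/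
theorem f_u_ge_two_F_ge_zero {N : ℕ} (hN : 3 ≤ N)
    (f : EuclideanSpace ℝ (Fin N) → ℝ → ℝ)
    (hmeas : ∀ s : ℝ, Measurable fun x => f x s)
    (hcont : ∀ x, Continuous (f x))
    (hF2 : ∀ ε > (0:ℝ), ∃ δ > (0:ℝ), ∀ x u, u ≠ 0 → |u| ≤ δ → |f x u| ≤ ε * |u|)
    (hF4 : ∀ x, MonotoneOn (fun u => f x u / |u|) (Set.Iio (0:ℝ)) ∧
                MonotoneOn (fun u => f x u / |u|) (Set.Ioi (0:ℝ))) :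
    ∀ x u, (0 ≤ 2 * ∫ s in (0:ℝ)..u, f x s) ∧
      2 * (∫ s in (0:ℝ)..u, f x s) ≤ f x u * u := by
  intro x u
  -- f x 0 = 0
  have hf0 : f x 0 = 0 := by
    obtain ⟨δ, hδ, h1⟩ := hF2 1 one_pos
    have h2 : Filter.Tendsto (f x) (nhdsWithin 0 (Set.Ioi 0)) (nhds 0) := by
      apply squeeze_zero_norm' (a := fun t => t)
      · filter_upwards [Ioc_mem_nhdsGT_of_mem ⟨le_rfl, hδ⟩] with t ht
        have := h1 x t (ne_of_gt ht.1) (by rw [abs_of_pos ht.1]; exact ht.2)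
        rw [abs_of_pos ht.1] at this
        simpa [Real.norm_eq_abs] using this
      · exact Filter.tendsto_id.mono_left nhdsWithin_le_nhds
    have h3 : Filter.Tendsto (f x) (nhdsWithin 0 (Set.Ioi 0)) (nhds (f x 0)) :=
      ((hcont x).tendsto 0).mono_left nhdsWithin_le_nhds
    exact tendsto_nhds_unique h3 h2
  -- f x s ≥ 0 for s > 0
  have hpos : ∀ s : ℝ, 0 < s → 0 ≤ f x s := by
    intro s hs
    have key : ∀ ε > (0:ℝ), -ε ≤ f x s / s := by
      intro ε hε
      obtain ⟨δ, hδ, h1⟩ := hF2 ε hε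
      set t := min s δ with ht
      have ht0 : 0 < t := lt_min hs hδ
      have h2 := h1 x t (ne_of_gt ht0) (by rw [abs_of_pos ht0]; exact min_le_right _ _)
      rw [abs_of_pos ht0] at h2
      have h3 : -ε ≤ f x t / t := by
        rw [le_div_iff₀ ht0]
        have := (abs_le.mp h2).1
        nlinarith
      have h4 : f x t / |t| ≤ f x s / |s| :=
        (hF4 x).2 (Set.mem_Ioi.mpr ht0) (Set.mem_Ioi.mpr hs) (min_le_left _ _)
      rw [abs_of_pos ht0, abs_of_pos hs] at h4
      linarith
    have hq : 0 ≤ f x s / s := by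
      by_contra h
      push_neg at h
      have := key (-(f x s / s) / 2) (by linarith)
      linarith
    have := mul_nonneg hq hs.le
    rwa [div_mul_cancel₀ _ (ne_of_gt hs)] at this
  -- f x s ≤ 0 for s < 0
  have hneg : ∀ s : ℝ, s < 0 → f x s ≤ 0 := by
    intro s hs
    have key : ∀ ε > (0:ℝ), f x s / (-s) ≤ ε := by
      intro ε hε
      obtain ⟨δ, hδ, h1⟩ := hF2 ε hε
      set t := max s (-δ) with ht
      have ht0 : t < 0 := max_lt hs (by linarith)
      have h2 := h1 x t (ne_of_lt ht0) (by rw [abs_of_neg ht0]; linarith [le_max_right s (-δ)])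
      rw [abs_of_neg ht0] at h2
      have h3 : f x t / (-t) ≤ ε := by
        rw [div_le_iff₀ (by linarith : (0:ℝ) < -t)]
        have := (abs_le.mp h2).2
        nlinarith
      have h4 : f x s / |s| ≤ f x t / |t| :=
        (hF4 x).1 (Set.mem_Iio.mpr hs) (Set.mem_Iio.mpr ht0) (le_max_left _ _)
      rw [abs_of_neg ht0, abs_of_neg hs] at h4
      linarith
    have hq : f x s / (-s) ≤ 0 := by
      by_contra h
      push_neg at h
      have := key ((f x s / (-s)) / 2) (by linarith)
      linarith
    have := mul_nonpos_of_nonpos_of_nonneg hq (by linarith : (0:ℝ) ≤ -s)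
    rwa [div_mul_cancel₀ _ (by linarith : (-s) ≠ 0)] at this
  rcases lt_trichotomy u 0 with hu | hu | hu
  · -- u < 0
    have hint1 : IntervalIntegrable (f x) volume u 0 := (hcont x).intervalIntegrable u 0
    have hint2 : IntervalIntegrable (fun s => f x u / u * s) volume u 0 :=
      (continuous_const.mul continuous_id).intervalIntegrable u 0
    have key2 : ∀ s ∈ Set.Icc u 0, f x u / u * s ≤ f x s := by
      intro s hs
      rcases eq_or_lt_of_le hs.2 with h0 | h0
      · rw [h0, hf0]; simp
      · have h4 : f x u / |u| ≤ f x s / |s| :=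
          (hF4 x).1 (Set.mem_Iio.mpr hu) (Set.mem_Iio.mpr h0) hs.1
        rw [abs_of_neg hu, abs_of_neg h0,
          div_le_div_iff₀ (by linarith) (by linarith)] at h4
        rw [div_mul_eq_mul_div, div_le_iff_of_neg hu]
        nlinarith
    have hmono := intervalIntegral.integral_mono_on hu.le hint2 hint1 key2
    rw [intervalIntegral.integral_const_mul, integral_id] at hmono
    have hnp : (∫ s in u..(0:ℝ), f x s) ≤ 0 := by
      have h := intervalIntegral.integral_nonneg (μ := volume) (f := fun s => -(f x s)) hu.le
        (fun s hs => by
          rcases eq_or_lt_of_le hs.2 with h0 | h0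
          · simp [h0, hf0]
          · simpa using hneg s h0)
      rw [intervalIntegral.integral_neg] at h
      linarith
    have hsymm : (∫ s in (0:ℝ)..u, f x s) = -∫ s in u..(0:ℝ), f x s :=
      (intervalIntegral.integral_symm u 0)
    have hu' : u ≠ 0 := ne_of_lt hu
    have heq : f x u / u * ((0 ^ 2 - u ^ 2) / 2) = -(f x u * u) / 2 := by
      field_simp
      ring
    constructor
    · rw [hsymm]; linarith
    · rw [hsymm]; rw [heq] at hmono; linarith
  · subst hu; simp
  · -- u > 0
    have hint1 : IntervalIntegrable (f x) volume 0 u := (hcont x).intervalIntegrable 0 u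
    have hint2 : IntervalIntegrable (fun s => f x u / u * s) volume 0 u :=
      (continuous_const.mul continuous_id).intervalIntegrable 0 u
    have key2 : ∀ s ∈ Set.Icc (0:ℝ) u, f x s ≤ f x u / u * s := by
      intro s hs
      rcases eq_or_lt_of_le hs.1 with h0 | h0
      · rw [← h0, hf0]; simp
      · have h4 : f x s / |s| ≤ f x u / |u| :=
          (hF4 x).2 (Set.mem_Ioi.mpr h0) (Set.mem_Ioi.mpr hu) hs.2
        rw [abs_of_pos h0, abs_of_pos hu, div_le_div_iff₀ h0 hu] at h4
        rw [div_mul_eq_mul_div, le_div_iff₀ hu]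
        nlinarith
    have hmono := intervalIntegral.integral_mono_on hu.le hint1 hint2 key2
    rw [intervalIntegral.integral_const_mul, integral_id] at hmono
    have hnn : 0 ≤ (∫ s in (0:ℝ)..u, f x s) := by
      apply intervalIntegral.integral_nonneg hu.le
      intro s hs
      rcases eq_or_lt_of_le hs.1 with h0 | h0
      · rw [← h0, hf0]
      · exact hpos s h0
    have hu' : u ≠ 0 := ne_of_gt hu
    have heq : f x u / u * ((u ^ 2 - 0 ^ 2) / 2) = f x u * u / 2 := by
      field_simp
      ring
    constructor
    · linarith
    · rw [heq] at hmono; linarith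
end

section
/- Let f : ℝ → ℝ be continuous and suppose that the map s ↦ f(s)/|s| is nondecreasing on (−∞,0) and nondecreasing on (0,∞). Let F(s) = ∫₀^s f(τ) dτ. Then for every u ∈ ℝ and every t ≥ 0 one has ((t²−1)/2)·f(u)·u − F(tu) + F(u) ≤ 0; equivalently, F(tu) ≥ F(u) + ((t²−1)/2) f(u) u. -/
/-! For fixed `u`, the defect `g s = (s² - 1)/2 · f(u)u - F(su) + F(u)` vanishes at `s = 1` and
has derivative `s · (q 1 - q s)` with `q s = f(su)u/s`. Writing `q s = u|u| · f(su)/|su|` shows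
that `q` is nondecreasing on `(0, ∞)` for either sign of `u`: for `u < 0` the reversal of order by
`s ↦ su` is undone by the factor `u|u| < 0`. Hence `g` increases up to `1` and decreases after it,
so `g t ≤ g 1 = 0` for `t ≥ 0`. -/

open MeasureTheory Set

theorem le_of_hasDerivAt_of_nonneg_of_nonpos {g g' : ℝ → ℝ} {a b t : ℝ}
    (hg : ∀ x, HasDerivAt g (g' x) x) (hleft : ∀ x ∈ Ioo b a, 0 ≤ g' x)
    (hright : ∀ x ∈ Ioi a, g' x ≤ 0) (ht : b ≤ t) : g t ≤ g a := by
  have hcont : Continuous g := continuous_iff_continuousAt.2 fun x => (hg x).continuousAt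
  rcases le_total t a with hta | hat
  · refine monotoneOn_of_hasDerivWithinAt_nonneg (convex_Icc t a) hcont.continuousOn
      (fun x _ => (hg x).hasDerivWithinAt) (fun x hx => hleft x ?_)
      (left_mem_Icc.2 hta) (right_mem_Icc.2 hta) hta
    rw [interior_Icc] at hx
    exact ⟨ht.trans_lt hx.1, hx.2⟩
  · refine antitoneOn_of_hasDerivWithinAt_nonpos (convex_Icc a t) hcont.continuousOn
      (fun x _ => (hg x).hasDerivWithinAt) (fun x hx => hright x ?_)
      (left_mem_Icc.2 hat) (right_mem_Icc.2 hat) hat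
    rw [interior_Icc] at hx
    exact hx.1

section

variable {f : ℝ → ℝ}

theorem mul_div_eq_mul_abs_mul_div_abs (u : ℝ) {s : ℝ} (hs : 0 < s) :
    f (s * u) * u / s = u * |u| * (f (s * u) / |s * u|) := by
  rcases eq_or_ne u 0 with rfl | hu
  · simp
  rw [abs_mul, abs_of_pos hs]
  field_simp

theorem monotoneOn_mul_div_of_monotoneOn_div_abs
    (hmono₁ : MonotoneOn (fun s => f s / |s|) (Iio 0))
    (hmono₂ : MonotoneOn (fun s => f s / |s|) (Ioi 0)) (u : ℝ) :
    MonotoneOn (fun s => f (s * u) * u / s) (Ioi 0) := by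
  intro s (hs : 0 < s) r (hr : 0 < r) hsr
  simp only [mul_div_eq_mul_abs_mul_div_abs u hs, mul_div_eq_mul_abs_mul_div_abs u hr]
  rcases lt_trichotomy u 0 with hu | rfl | hu
  · refine mul_le_mul_of_nonpos_left (hmono₁ (mul_neg_of_pos_of_neg hr hu)
      (mul_neg_of_pos_of_neg hs hu) (mul_le_mul_of_nonpos_right hsr hu.le)) ?_
    nlinarith [abs_pos.2 hu.ne]
  · simp
  · exact mul_le_mul_of_nonneg_left (hmono₂ (mul_pos hs hu) (mul_pos hr hu)
      (mul_le_mul_of_nonneg_right hsr hu.le)) (by positivity)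

theorem hasDerivAt_integral_mul (hf : Continuous f) (u s : ℝ) :
    HasDerivAt (fun s => ∫ τ in (0:ℝ)..(s * u), f τ) (f (s * u) * u) s := by
  have hF := intervalIntegral.integral_hasDerivAt_right (hf.intervalIntegrable 0 (s * u))
    (hf.stronglyMeasurableAtFilter _ _) hf.continuousAt
  have h := hF.comp s ((hasDerivAt_id s).mul_const u)
  simp only [Function.comp_def, id, one_mul] at h
  exact h

end

/-- Pointwise inequality underlying condition (J3): if `s ↦ f(s)/|s|` is nondecreasing
on `(-∞,0)` and on `(0,∞)`, then for all `u` and `t ≥ 0`,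
`((t²-1)/2)·f(u)·u - F(tu) + F(u) ≤ 0`, where `F(s) = ∫₀ˢ f`. -/
theorem pointwise_J3_inequality (f : ℝ → ℝ) (hf : Continuous f)
    (hmono₁ : MonotoneOn (fun s => f s / |s|) (Set.Iio (0:ℝ)))
    (hmono₂ : MonotoneOn (fun s => f s / |s|) (Set.Ioi (0:ℝ))) :
    ∀ (u t : ℝ), 0 ≤ t →
      (t ^ 2 - 1) / 2 * (f u * u) - (∫ τ in (0:ℝ)..(t * u), f τ)
        + (∫ τ in (0:ℝ)..u, f τ) ≤ 0 := by
  intro u t ht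
  set q := fun s => f (s * u) * u / s
  have hq := monotoneOn_mul_div_of_monotoneOn_div_abs hmono₁ hmono₂ u
  have hderiv_eq (s : ℝ) (hs : 0 < s) : s * (f u * u) - f (s * u) * u = s * (q 1 - q s) := by
    simp only [q]; field_simp
  have hderiv (s : ℝ) : HasDerivAt (fun s => (s ^ 2 - 1) / 2 * (f u * u)
      - (∫ τ in (0:ℝ)..(s * u), f τ) + ∫ τ in (0:ℝ)..u, f τ) (s * (f u * u) - f (s * u) * u) s := by
    refine (((hasDerivAt_pow 2 s).sub_const 1).div_const 2).mul_const (f u * u)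
      |>.sub (hasDerivAt_integral_mul hf u s) |>.add_const _ |>.congr_deriv ?_
    norm_num
  have h1 : (1 : ℝ) ∈ Ioi 0 := mem_Ioi.2 one_pos
  have hmax := le_of_hasDerivAt_of_nonneg_of_nonpos hderiv (a := 1) (b := 0) ?_ ?_ ht
  · simpa using hmax
  · rintro s ⟨hs0, hs1⟩
    rw [hderiv_eq s hs0]
    exact mul_nonneg hs0.le (sub_nonneg.2 (hq hs0 h1 hs1.le))
  · rintro s (hs1 : 1 < s)
    have hs0 : 0 < s := one_pos.trans hs1
    rw [hderiv_eq s hs0]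
    exact mul_nonpos_of_nonneg_of_nonpos hs0.le (sub_nonpos.2 (hq h1 hs0 hs1.le))
end

section
/- Let N ≥ 3, s ∈ (1/2, 1), and set q = 2N/(N−2s). Let (u_n) be a sequence of measurable functions on ℝ^N that is bounded both in L²(ℝ^N) and in L^q(ℝ^N). Let w : ℝ^N → ℝ be measurable with |w(x)| ≤ C e^{−α|x|} for almost every x, for some constants C, α > 0, and let (x_n) ⊂ ℝ^N with |x_n| → ∞. Then ∫_{ℝ^N} w(x − x_n)·u_n(x)/|x|² dx → 0 as n → ∞. -/
/-!
Split the integral at the sphere `‖x‖ = R`. Outside the ball, `‖x‖⁻² ≤ R⁻²` and Cauchy–Schwarz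
bound the contribution by `R⁻² ‖w‖₂ ‖uₙ‖₂`. Inside the ball, `|w (x - xₙ)| ≤ C e^{-α (‖xₙ‖ - R)}`,
and Hölder's inequality with exponents `q` and `q' = 2N/(N+2s)` bounds the rest by
`‖uₙ‖_q ‖‖x‖⁻²‖_{L^{q'}(B_R)}`, which is finite because `2q' < N` (this is where `s > 1/2` enters
when `N = 3`). Letting first `n → ∞` and then `R → ∞` gives the claim.
-/

open MeasureTheory Filter Topology Metric
open scoped ENNReal

theorem ENNReal.tendsto_nhds_zero_of_le_add {ι κ : Type*} {l : Filter ι} {l' : Filter κ}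
    [l'.NeBot] {f : ι → ℝ≥0∞} {a : κ → ι → ℝ≥0∞} {b : κ → ℝ≥0∞}
    (ha : ∀ k, Tendsto (a k) l (𝓝 0)) (hb : Tendsto b l' (𝓝 0))
    (hf : ∀ᶠ k in l', ∀ i, f i ≤ a k i + b k) : Tendsto f l (𝓝 0) := by
  refine ENNReal.tendsto_nhds_zero.2 fun ε hε => ?_
  have hε2 : 0 < ε / 2 := ENNReal.half_pos hε.ne'
  obtain ⟨k, hbk, hfk⟩ := ((ENNReal.tendsto_nhds_zero.1 hb _ hε2).and hf).exists
  filter_upwards [ENNReal.tendsto_nhds_zero.1 (ha k) _ hε2] with i hi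
  calc f i ≤ a k i + b k := hfk i
    _ ≤ ε / 2 + ε / 2 := add_le_add hi hbk
    _ = ε := ENNReal.add_halves ε

theorem tendsto_integral_zero_of_tendsto_eLpNorm_one {α G ι : Type*} [MeasurableSpace α]
    {μ : Measure α} [NormedAddCommGroup G] [NormedSpace ℝ G] {l : Filter ι} {F : ι → α → G}
    (hF : Tendsto (fun i => eLpNorm (F i) 1 μ) l (𝓝 0)) :
    Tendsto (fun i => ∫ x, F i x ∂μ) l (𝓝 0) := by
  refine tendsto_zero_iff_enorm_tendsto_zero.2 <|
    tendsto_of_tendsto_of_tendsto_of_le_of_le tendsto_const_nhds hF (fun _ => bot_le)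
      fun i => ?_
  rw [eLpNorm_one_eq_lintegral_enorm]
  exact enorm_integral_le_lintegral_enorm _

theorem eLpNorm_one_mul_mul_le_of_ae_abs_le {α : Type*} [MeasurableSpace α] {μ : Measure α}
    {p q : ℝ≥0∞} [p.HolderTriple q 1] {f g k : α → ℝ} {K : ℝ} (hf : ∀ᵐ x ∂μ, |f x| ≤ K)
    (hg : AEStronglyMeasurable g μ) (hk : AEStronglyMeasurable k μ) :
    eLpNorm (fun x => f x * g x * k x) 1 μ ≤
      ENNReal.ofReal K * (eLpNorm g p μ * eLpNorm k q μ) := by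
  calc eLpNorm (fun x => f x * g x * k x) 1 μ ≤ ENNReal.ofReal K * eLpNorm (g • k) 1 μ := by
        refine eLpNorm_le_mul_eLpNorm_of_ae_le_mul ?_ _
        filter_upwards [hf] with x hx
        rw [Pi.smul_apply', smul_eq_mul, norm_mul, norm_mul, norm_mul, mul_assoc, Real.norm_eq_abs]
        exact mul_le_mul_of_nonneg_right hx (by positivity)
    _ ≤ ENNReal.ofReal K * (eLpNorm g p μ * eLpNorm k q μ) := by
        gcongr
        exact eLpNorm_smul_le_mul_eLpNorm hk hg

section TranslationInvariant

variable {G : Type*} [NormedAddCommGroup G] [MeasurableSpace G] [BorelSpace G]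
  {μ : Measure G} [μ.IsAddRightInvariant]

theorem ae_abs_translate_le_of_abs_le_exp {w : G → ℝ} {C α : ℝ} (hC : 0 ≤ C) (hα : 0 ≤ α)
    (hdecay : ∀ᵐ x ∂μ, |w x| ≤ C * Real.exp (-α * ‖x‖)) (c : G) (R : ℝ) :
    ∀ᵐ x ∂μ, ‖x‖ ≤ R → |w (x - c)| ≤ C * Real.exp (-α * (‖c‖ - R)) := by
  filter_upwards [(measurePreserving_sub_right μ c).quasiMeasurePreserving.ae hdecay]
    with x hx hxR
  refine hx.trans (mul_le_mul_of_nonneg_left (Real.exp_le_exp.2 ?_) hC)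
  have : ‖c‖ - ‖x‖ ≤ ‖x - c‖ := by simpa [norm_sub_rev] using norm_sub_norm_le c x
  nlinarith

theorem eLpNorm_translate_mul_mul_norm_rpow_neg_le {p q : ℝ≥0∞} [p.HolderTriple q 1]
    {w u : G → ℝ} (hw : AEStronglyMeasurable w μ) (hu : AEStronglyMeasurable u μ)
    {γ R K : ℝ} (hγ : 0 ≤ γ) (hR : 0 < R) (c : G) (hK : ∀ᵐ x ∂μ, ‖x‖ ≤ R → |w (x - c)| ≤ K) :
    eLpNorm (fun x => w (x - c) * u x * ‖x‖ ^ (-γ)) 1 μ ≤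
      ENNReal.ofReal K *
          (eLpNorm u p μ * eLpNorm (fun x : G => ‖x‖ ^ (-γ)) q (μ.restrict (closedBall 0 R))) +
        ENNReal.ofReal (R ^ (-γ)) * (eLpNorm w 2 μ * eLpNorm u 2 μ) := by
  set S := closedBall (0 : G) R
  have hS : MeasurableSet S := measurableSet_closedBall
  have hnorm : AEStronglyMeasurable (fun x : G => ‖x‖ ^ (-γ)) μ :=
    (measurable_norm.pow_const _).aestronglyMeasurable
  have hwc : AEStronglyMeasurable (fun x => w (x - c)) μ :=
    hw.comp_measurePreserving (measurePreserving_sub_right μ c)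
  have hwc2 : eLpNorm (fun x => w (x - c)) 2 μ = eLpNorm w 2 μ :=
    eLpNorm_comp_measurePreserving hw (measurePreserving_sub_right μ c)
  rw [← Measure.restrict_add_restrict_compl (μ := μ) hS, eLpNorm_one_add_measure,
    Measure.restrict_add_restrict_compl hS]
  gcongr
  · have hKS : ∀ᵐ x ∂μ.restrict S, |w (x - c)| ≤ K :=
      (ae_restrict_iff' hS).2 (hK.mono fun x hx hxS => hx (mem_closedBall_zero_iff.1 hxS))
    grw [eLpNorm_one_mul_mul_le_of_ae_abs_le (p := p) (q := q) hKS hu.restrict hnorm.restrict,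
      eLpNorm_restrict_le]
  · have hRS : ∀ᵐ x ∂μ.restrict Sᶜ, |‖x‖ ^ (-γ)| ≤ R ^ (-γ) := by
      refine ae_restrict_of_forall_mem hS.compl fun x hx => ?_
      have hxR : R ≤ ‖x‖ := (lt_of_not_ge fun h => hx (mem_closedBall_zero_iff.2 h)).le
      rw [abs_of_nonneg (by positivity)]
      exact Real.rpow_le_rpow_of_nonpos hR hxR (neg_nonpos.2 hγ)
    have hrw : (fun x => w (x - c) * u x * ‖x‖ ^ (-γ)) =
        fun x => ‖x‖ ^ (-γ) * w (x - c) * u x := by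
      ext x; ring
    rw [hrw]
    grw [eLpNorm_one_mul_mul_le_of_ae_abs_le (p := 2) (q := 2) hRS hwc.restrict hu.restrict,
      eLpNorm_restrict_le, eLpNorm_restrict_le, hwc2]

end TranslationInvariant

section AddHaar

variable {E : Type*} [NormedAddCommGroup E] [NormedSpace ℝ E] [FiniteDimensional ℝ E]
  [MeasurableSpace E] [BorelSpace E] {μ : Measure E} [μ.IsAddHaarMeasure]

theorem memLp_norm_rpow_neg_restrict_closedBall {γ : ℝ} {p : ℝ≥0∞} (hp0 : p ≠ 0) (hp : p ≠ ∞)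
    (hγ : γ * p.toReal < Module.finrank ℝ E) (hd : 1 ≤ Module.finrank ℝ E) (R : ℝ) :
    MemLp (fun x : E => ‖x‖ ^ (-γ)) p (μ.restrict (closedBall 0 R)) := by
  have hmeas (β : ℝ) : AEStronglyMeasurable (fun x : E => ‖x‖ ^ β) μ :=
    (measurable_norm.pow_const β).aestronglyMeasurable
  refine (integrable_norm_rpow_iff (hmeas _).restrict hp0 hp).1 ?_
  have hloc : LocallyIntegrable (fun x : E => ‖x‖ ^ (-(γ * p.toReal))) μ :=
    locallyIntegrable_of_norm_le_rpow (C := 1) hd hγ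
      (ae_of_all _ fun x => by simp [abs_of_nonneg (Real.rpow_nonneg (norm_nonneg x) _)])
      (hmeas _)
  refine (hloc.integrableOn_isCompact (isCompact_closedBall 0 R)).congr_fun (fun x _ => ?_)
    measurableSet_closedBall
  rw [Real.norm_of_nonneg (Real.rpow_nonneg (norm_nonneg x) _), ← Real.rpow_mul (norm_nonneg x),
    neg_mul]

theorem integrable_exp_neg_mul_norm [Nontrivial E] {b : ℝ} (hb : 0 < b) :
    Integrable (fun x : E => Real.exp (-b * ‖x‖)) μ := by
  refine (integrable_fun_norm_addHaar μ (f := fun t => Real.exp (-b * t))).2 ?_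
  have := integrableOn_rpow_mul_exp_neg_mul_rpow (s := (Module.finrank ℝ E - 1 : ℕ)) (p := 1)
    (neg_one_lt_zero.trans_le (Nat.cast_nonneg _)) one_pos hb
  refine this.congr_fun (fun t ht => ?_) measurableSet_Ioi
  simp [Real.rpow_natCast]

theorem memLp_exp_neg_mul_norm [Nontrivial E] {b : ℝ} (hb : 0 < b) {p : ℝ≥0∞} (hp : p ≠ ∞) :
    MemLp (fun x : E => Real.exp (-b * ‖x‖)) p μ := by
  rcases eq_or_ne p 0 with rfl | hp0
  · exact memLp_zero_iff_aestronglyMeasurable.2 (by fun_prop)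
  refine (integrable_norm_rpow_iff (by fun_prop) hp0 hp).1 ?_
  refine (integrable_exp_neg_mul_norm (mul_pos hb (ENNReal.toReal_pos hp0 hp))).congr
    (ae_of_all _ fun x => ?_)
  simp only [Real.norm_of_nonneg (Real.exp_nonneg _), ← Real.exp_mul]
  ring_nf

theorem tendsto_eLpNorm_translate_mul_mul_norm_rpow_neg {ι : Type*} {l : Filter ι}
    {p q : ℝ≥0∞} [p.HolderConjugate q] (hq : q ≠ ∞) {γ : ℝ} (hγ : 0 < γ)
    (hγq : γ * q.toReal < Module.finrank ℝ E)
    {w : E → ℝ} (hw : AEStronglyMeasurable w μ) {C α : ℝ} (hC : 0 ≤ C) (hα : 0 < α)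
    (hdecay : ∀ᵐ x ∂μ, |w x| ≤ C * Real.exp (-α * ‖x‖))
    {u : ι → E → ℝ} (hu : ∀ i, AEStronglyMeasurable (u i) μ) {M : ℝ≥0∞} (hM : M ≠ ∞)
    (hu2 : ∀ i, eLpNorm (u i) 2 μ ≤ M) (hup : ∀ i, eLpNorm (u i) p μ ≤ M)
    {c : ι → E} (hc : Tendsto (fun i => ‖c i‖) l atTop) :
    Tendsto (fun i => eLpNorm (fun x => w (x - c i) * u i x * ‖x‖ ^ (-γ)) 1 μ) l (𝓝 0) := by
  have hq0 : q ≠ 0 := ENNReal.HolderConjugate.ne_zero q p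
  have hd : 1 ≤ Module.finrank ℝ E := by
    have : 0 < γ * q.toReal := mul_pos hγ (ENNReal.toReal_pos hq0 hq)
    exact_mod_cast (this.trans hγq)
  have : Nontrivial E := Module.nontrivial_of_finrank_pos (R := ℝ) hd
  have hw2 : eLpNorm w 2 μ ≠ ∞ :=
    (((memLp_exp_neg_mul_norm hα ENNReal.ofNat_ne_top).const_mul C).of_le hw
      (hdecay.mono fun x hx => by simpa [abs_of_nonneg hC] using hx)).eLpNorm_ne_top
  set B : ℝ → ℝ≥0∞ := fun R =>
    eLpNorm (fun x : E => ‖x‖ ^ (-γ)) q (μ.restrict (closedBall 0 R))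
  have hB (R : ℝ) : B R ≠ ∞ :=
    (memLp_norm_rpow_neg_restrict_closedBall hq0 hq hγq hd R).eLpNorm_ne_top
  refine ENNReal.tendsto_nhds_zero_of_le_add (l' := atTop)
    (a := fun R i => ENNReal.ofReal (C * Real.exp (-α * (‖c i‖ - R))) * (M * B R))
    (b := fun R => ENNReal.ofReal (R ^ (-γ)) * (eLpNorm w 2 μ * M)) (fun R => ?_) ?_ ?_
  · have hexp : Tendsto (fun i => C * Real.exp (-α * (‖c i‖ - R))) l (𝓝 0) := by
      have : Tendsto (fun i => -α * (‖c i‖ - R)) l atBot :=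
        (tendsto_atTop_add_const_right _ (-R) hc).const_mul_atTop_of_neg (neg_lt_zero.2 hα)
      simpa using (Real.tendsto_exp_atBot.comp this).const_mul C
    simpa using ENNReal.Tendsto.mul_const (ENNReal.tendsto_ofReal hexp)
      (Or.inr (ENNReal.mul_ne_top hM (hB R)))
  · simpa using ENNReal.Tendsto.mul_const (ENNReal.tendsto_ofReal (tendsto_rpow_neg_atTop hγ))
      (Or.inr (ENNReal.mul_ne_top hw2 hM))
  · filter_upwards [eventually_gt_atTop 0] with R hR i
    grw [eLpNorm_translate_mul_mul_norm_rpow_neg_le (p := p) (q := q) hw (hu i) hγ.le hR (c i)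
      (ae_abs_translate_le_of_abs_le_exp hC hα.le hdecay (c i) R), hup i, hu2 i]

end AddHaar

theorem Real.holderConjugate_div_sub_div_add {N s : ℝ} (hs : 0 < s) (hsN : 2 * s < N) :
    (2 * N / (N - 2 * s)).HolderConjugate (2 * N / (N + 2 * s)) := by
  have hN : 0 < N := by linarith
  refine Real.holderConjugate_iff.2 ⟨?_, ?_⟩
  · rw [one_lt_div (by linarith)]
    linarith
  · rw [inv_div, inv_div]
    field_simp
    ring

/-- Key estimate from Step 4 of the profile decomposition: if `(u_n)` is bounded in
`L²` and in `L^q` with `q = 2N/(N-2s)`, `s ∈ (1/2,1)`, `w` decays exponentially and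
`|x_n| → ∞`, then `∫ w(x-x_n) u_n(x)/|x|² dx → 0`. -/
theorem hardy_weight_translation_estimate {N : ℕ} (hN : 3 ≤ N)
    (s : ℝ) (hs : 1 / 2 < s) (hs1 : s < 1)
    (q : ℝ) (hq : q = 2 * (N : ℝ) / ((N : ℝ) - 2 * s))
    (un : ℕ → EuclideanSpace ℝ (Fin N) → ℝ) (hmeas : ∀ n, Measurable (un n))
    (hbdd : ∃ M : ℝ, ∀ n, eLpNorm (un n) 2 volume ≤ ENNReal.ofReal M ∧
      eLpNorm (un n) (ENNReal.ofReal q) volume ≤ ENNReal.ofReal M)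
    (w : EuclideanSpace ℝ (Fin N) → ℝ) (hwmeas : Measurable w)
    (C α : ℝ) (hC : 0 < C) (hα : 0 < α)
    (hw : ∀ᵐ x, |w x| ≤ C * Real.exp (-α * ‖x‖))
    (xn : ℕ → EuclideanSpace ℝ (Fin N))
    (hxn : Tendsto (fun n => ‖xn n‖) atTop atTop) :
    Tendsto (fun n => ∫ x, w (x - xn n) * un n x / ‖x‖ ^ 2) atTop (𝓝 0) := by
  obtain ⟨M, hM⟩ := hbdd
  have hNR : (3 : ℝ) ≤ N := by exact_mod_cast hN
  have hconj := (Real.holderConjugate_div_sub_div_add (N := N) (s := s) (by linarith)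
    (by linarith)).ennrealOfReal
  rw [← hq] at hconj
  have hγq : 2 * (ENNReal.ofReal (2 * N / (N + 2 * s))).toReal <
      Module.finrank ℝ (EuclideanSpace ℝ (Fin N)) := by
    rw [finrank_euclideanSpace_fin, ENNReal.toReal_ofReal (by positivity), ← mul_div_assoc,
      div_lt_iff₀ (by positivity)]
    nlinarith
  have key := tendsto_eLpNorm_translate_mul_mul_norm_rpow_neg ENNReal.ofReal_ne_top two_pos hγq
    hwmeas.aestronglyMeasurable hC.le hα hw (fun n => (hmeas n).aestronglyMeasurable)
    ENNReal.ofReal_ne_top (fun n => (hM n).1) (fun n => (hM n).2) hxn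
  refine (tendsto_integral_zero_of_tendsto_eLpNorm_one key).congr fun n => ?_
  congr 1 with x
  rw [Real.rpow_neg (norm_nonneg x), Real.rpow_two, div_eq_mul_inv]
end
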